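/- Let λ > 0, μ > 0 and define G : ℝ → ℝ by G(t) = μ (2/λ)^{1/4} y((λ/2)^{1/4} μ t) for t ≥ 0 and G(t) = 0 for t < 0. Then G is continuous, and for every smooth compactly supported test function φ : ℝ → ℝ one has ∫_ℝ G(t) φ''(t) dt + λ ∫_ℝ G(t)³ φ(t) dt = μ² φ(0); that is, G is a causal Green function solving G'' + λ G³ = μ² δ in the sense of distributions. -/

import Mathlib

open Real MeasureTheory

/-- The causal Green function of the strongly coupled massless quartic oscillator:
with `y` the unique maximal solution of `y'' = -2y³`, `y(0) = 0`, `y'(0) = 1`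
(the Jacobi elliptic function `sn(·, i)`), the function
`G(t) = θ(t) μ (2/λ)^{1/4} y((λ/2)^{1/4} μ t)` is continuous and solves
`G'' + λ G³ = μ² δ` in the sense of distributions. -/
theorem causal_green_function
    (y yd : ℝ → ℝ)
    (hy : ∀ u : ℝ, HasDerivAt y (yd u) u)
    (hyd : ∀ u : ℝ, HasDerivAt yd (-2 * y u ^ 3) u)
    (hy0 : y 0 = 0) (hyd0 : yd 0 = 1)
    (lam μ : ℝ) (hlam : 0 < lam) (hμ : 0 < μ)
    (G : ℝ → ℝ)
    (hG : G = fun t =>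
      if 0 ≤ t then μ * (2 / lam) ^ ((1 : ℝ) / 4) * y ((lam / 2) ^ ((1 : ℝ) / 4) * μ * t)
      else 0) :
    Continuous G ∧
      ∀ φ : ℝ → ℝ, ContDiff ℝ (⊤ : ℕ∞) φ → HasCompactSupport φ →
        (∫ t : ℝ, G t * deriv (deriv φ) t) + lam * ∫ t : ℝ, G t ^ 3 * φ t
          = μ ^ 2 * φ 0 := by
  have hyc : Continuous y :=
    Differentiable.continuous (fun u => (hy u).differentiableAt)
  have hydc : Continuous yd :=
    Differentiable.continuous (fun u => (hyd u).differentiableAt)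
  set p : ℝ := (lam / 2) ^ ((1:ℝ)/4) with hpdef
  set q : ℝ := (2 / lam) ^ ((1:ℝ)/4) with hqdef
  have hp : 0 < p := Real.rpow_pos_of_pos (by positivity) _
  have hq0 : 0 < q := Real.rpow_pos_of_pos (by positivity) _
  have hpq : p * q = 1 := by
    rw [hpdef, hqdef, ← Real.mul_rpow (by positivity) (by positivity),
      show lam / 2 * (2 / lam) = 1 by field_simp]
    exact Real.one_rpow _
  have hp4 : p ^ (4:ℕ) = lam / 2 := by
    rw [hpdef, ← Real.rpow_natCast, ← Real.rpow_mul (by positivity)]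
    norm_num
  set a : ℝ := μ * q with hadef
  set c : ℝ := p * μ with hcdef
  have ha : 0 < a := by positivity
  have hac : a * c = μ ^ 2 := by
    rw [hadef, hcdef]; linear_combination μ ^ 2 * hpq
  have hkey : a * c * c * 2 = lam * a ^ 3 := by
    have hlam2 : lam = 2 * p ^ 4 := by rw [hp4]; ring
    have h1 : p ^ 2 * q ^ 2 = 1 := by nlinarith [hpq]
    rw [hadef, hcdef, hlam2]
    linear_combination (-(2 * p ^ 2 * μ ^ 3 * q)) * h1
  set g : ℝ → ℝ := fun t => a * y (c * t) with hgdef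
  have hg0 : g 0 = 0 := by simp [hgdef, hy0]
  have hcm : ∀ t : ℝ, HasDerivAt (fun t : ℝ => c * t) c t := by
    intro t; simpa using (hasDerivAt_id t).const_mul c
  have hgderiv : ∀ t, HasDerivAt g (a * c * yd (c * t)) t := by
    intro t
    have h := ((hy (c*t)).comp t (hcm t)).const_mul a
    exact h.congr_deriv (Eq.symm (by ring))
  have hgd2 : ∀ t, HasDerivAt (fun t => a * c * yd (c * t)) (-(lam * g t ^ 3)) t := by
    intro t
    have h := ((hyd (c*t)).comp t (hcm t)).const_mul (a*c)
    exact h.congr_deriv (Eq.symm (by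
      simp only [hgdef]
      linear_combination (y (c*t)) ^ 3 * hkey))
  have hGc : Continuous G := by
    rw [hG]
    apply Continuous.if_le (by fun_prop) continuous_const continuous_const continuous_id
    intro x hx
    have hx0 : x = 0 := hx.symm
    subst hx0
    simp [hy0]
  refine ⟨hGc, ?_⟩
  intro φ hφ hφs
  obtain ⟨R, hR⟩ := hφs.isCompact.isBounded.subset_closedBall 0
  set b : ℝ := |R| + 1 with hbdef
  have hb : 0 < b := by positivity
  have hout : ∀ x : ℝ, b ≤ x → x ∉ tsupport φ := by
    intro x hx hmem
    have h1 := hR hmem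
    rw [Metric.mem_closedBall, Real.dist_eq, sub_zero] at h1
    have h2 : x ≤ |x| := le_abs_self x
    have h3 : R ≤ |R| := le_abs_self R
    linarith
  have hφ' : ContDiff ℝ (⊤ : ℕ∞) φ := hφ.of_le (by simp)
  have hφd : ContDiff ℝ (⊤ : ℕ∞) (deriv φ) := (contDiff_infty_iff_deriv.mp hφ').2
  have hφddc : Continuous (deriv (deriv φ)) := (contDiff_infty_iff_deriv.mp hφd).2.continuous
  have hφb : φ b = 0 := image_eq_zero_of_notMem_tsupport (hout b le_rfl)
  have hφdb : deriv φ b = 0 := by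
    by_contra h
    exact hout b le_rfl (support_deriv_subset (Function.mem_support.mpr h))
  have hG0le : ∀ t : ℝ, t ≤ 0 → G t = 0 := by
    intro t ht
    rcases lt_or_eq_of_le ht with h' | h'
    · rw [hG]; simp [not_le.mpr h']
    · rw [hG]; simp [h', hy0]
  have hGeq : ∀ t : ℝ, 0 ≤ t → G t = g t := by
    intro t ht
    rw [hG, hgdef]; simp [ht]
  -- support arguments
  have hsupp1 : Function.support (fun t => G t * deriv (deriv φ) t) ⊆ Set.Ioc 0 b := by
    intro t ht
    simp only [Function.mem_support] at ht
    constructor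
    · by_contra h
      push_neg at h
      exact ht (by rw [hG0le t h]; ring)
    · by_contra h
      push_neg at h
      have hdd : deriv (deriv φ) t = 0 := by
        by_contra hdd
        have h1 : t ∈ tsupport (deriv φ) := support_deriv_subset (Function.mem_support.mpr hdd)
        have h2 : t ∈ tsupport φ :=
          closure_minimal support_deriv_subset isClosed_closure h1
        exact hout t h.le h2
      exact ht (by rw [hdd]; ring)
  have hsupp2 : Function.support (fun t => G t ^ 3 * φ t) ⊆ Set.Ioc 0 b := by
    intro t ht
    simp only [Function.mem_support] at ht
    constructor
    · by_contra h
      push_neg at h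
      exact ht (by rw [hG0le t h]; ring)
    · by_contra h
      push_neg at h
      have hd : φ t = 0 := image_eq_zero_of_notMem_tsupport (hout t h.le)
      exact ht (by rw [hd]; ring)
  have e1 : (∫ t : ℝ, G t * deriv (deriv φ) t) = ∫ t in (0:ℝ)..b, g t * deriv (deriv φ) t := by
    rw [← intervalIntegral.integral_eq_integral_of_support_subset hsupp1]
    apply intervalIntegral.integral_congr
    intro t htm
    rw [Set.uIcc_of_le hb.le] at htm
    simp only
    rw [hGeq t htm.1]
  have e2 : (∫ t : ℝ, G t ^ 3 * φ t) = ∫ t in (0:ℝ)..b, g t ^ 3 * φ t := by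
    rw [← intervalIntegral.integral_eq_integral_of_support_subset hsupp2]
    apply intervalIntegral.integral_congr
    intro t htm
    rw [Set.uIcc_of_le hb.le] at htm
    simp only
    rw [hGeq t htm.1]
  have hgc : Continuous g := by rw [hgdef]; fun_prop
  have hgdc : Continuous (fun t => a * c * yd (c * t)) := by fun_prop
  have hφ'at : ∀ x : ℝ, HasDerivAt φ (deriv φ x) x := fun x =>
    (hφ'.differentiable (by simp) x).hasDerivAt
  have hφ''at : ∀ x : ℝ, HasDerivAt (deriv φ) (deriv (deriv φ) x) x := fun x =>
    (hφd.differentiable (by simp) x).hasDerivAt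
  have ibp1 : (∫ t in (0:ℝ)..b, g t * deriv (deriv φ) t)
      = g b * deriv φ b - g 0 * deriv φ 0
        - ∫ t in (0:ℝ)..b, (a * c * yd (c * t)) * deriv φ t := by
    apply intervalIntegral.integral_mul_deriv_eq_deriv_mul
      (fun x _ => hgderiv x) (fun x _ => hφ''at x)
      (hgdc.intervalIntegrable _ _) (hφddc.intervalIntegrable _ _)
  have ibp2' : (∫ t in (0:ℝ)..b, (a * c * yd (c * t)) * deriv φ t)
      = (a * c * yd (c * b)) * φ b - (a * c * yd (c * 0)) * φ 0
        - ∫ t in (0:ℝ)..b, (-(lam * g t ^ 3)) * φ t := by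
    apply intervalIntegral.integral_mul_deriv_eq_deriv_mul
      (fun x _ => hgd2 x) (fun x _ => hφ'at x)
      ((by fun_prop : Continuous fun t => -(lam * g t ^ 3)).intervalIntegrable _ _)
      ((hφd.continuous).intervalIntegrable _ _)
  have hgd0 : a * c * yd (c * 0) = μ ^ 2 := by
    rw [mul_zero, hyd0, mul_one, hac]
  rw [e1, e2, ibp1, ibp2', hg0, hφdb, hφb, hgd0]
  have hne : (∫ t in (0:ℝ)..b, (-(lam * g t ^ 3)) * φ t)
      = -(lam * ∫ t in (0:ℝ)..b, g t ^ 3 * φ t) := by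
    rw [← intervalIntegral.integral_const_mul]
    rw [← intervalIntegral.integral_neg]
    congr 1
    ext t
    ring
  rw [hne]
  ring
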